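/- arXiv:2411.00342 — 6 statements merged into one kernel-verified Lean document; each statement's English description precedes it below -/
import Mathlib

section
/- Let A ⊆ ℝ be a measurable subset of a bounded interval with |A| > 0, and let n ∈ ℕ. Then there exist n+1 points x_0 < x_1 < ⋯ < x_n in the closure of A such that x_i − x_{i−1} ≥ |A|/(n+1) for all i = 1, …, n. -/
open MeasureTheory

/-- In a bounded measurable set `A ⊆ ℝ` of positive measure one can find `n+1`
points of the closure of `A`, increasing, with consecutive gaps at least `|A|/(n+1)`. -/
theorem exists_separated_points (A : Set ℝ) (hA : MeasurableSet A)
    (hAb : Bornology.IsBounded A) (hApos : 0 < volume A) (n : ℕ) :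
    ∃ x : Fin (n + 1) → ℝ, (∀ i, x i ∈ closure A) ∧ StrictMono x ∧
      ∀ i : Fin n, (volume A).toReal / (n + 1) ≤ x i.succ - x i.castSucc := by
  have hAfin : volume A ≠ ⊤ := hAb.measure_lt_top.ne
  set m : ℝ := (volume A).toReal with hm
  have hmpos : 0 < m := ENNReal.toReal_pos hApos.ne' hAfin
  set f : ℝ → ℝ := fun t => (volume (A ∩ Set.Iic t)).toReal with hf
  have hfin : ∀ t, volume (A ∩ Set.Iic t) ≠ ⊤ := fun t =>
    ((measure_mono Set.inter_subset_left).trans_lt hAfin.lt_top).ne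
  have hmono : Monotone f := fun a b hab =>
    ENNReal.toReal_mono (hfin b)
      (measure_mono (Set.inter_subset_inter_right _ (Set.Iic_subset_Iic.2 hab)))
  have hfdiff : ∀ a b : ℝ, a ≤ b →
      f b - f a = (volume (A ∩ Set.Ioc a b)).toReal := by
    intro a b hab
    have hsplit : A ∩ Set.Iic b = (A ∩ Set.Iic a) ∪ (A ∩ Set.Ioc a b) := by
      rw [← Set.inter_union_distrib_left, Set.Iic_union_Ioc_eq_Iic hab]
    have hdisj : Disjoint (A ∩ Set.Iic a) (A ∩ Set.Ioc a b) :=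
      Disjoint.mono Set.inter_subset_right Set.inter_subset_right
        (Set.Iic_disjoint_Ioc le_rfl)
    have := measure_union (μ := volume) hdisj (hA.inter measurableSet_Ioc)
    rw [← hsplit] at this
    simp only [hf]
    rw [this, ENNReal.toReal_add (hfin a)
      (((measure_mono Set.inter_subset_left).trans_lt hAfin.lt_top).ne)]
    ring
  have hlip : ∀ a b : ℝ, a ≤ b → f b - f a ≤ b - a := by
    intro a b hab
    rw [hfdiff a b hab]
    have h1 : volume (A ∩ Set.Ioc a b) ≤ ENNReal.ofReal (b - a) := by
      refine (measure_mono Set.inter_subset_right).trans ?_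
      rw [Real.volume_Ioc]
    calc (volume (A ∩ Set.Ioc a b)).toReal ≤ (ENNReal.ofReal (b - a)).toReal :=
          ENNReal.toReal_mono ENNReal.ofReal_ne_top h1
      _ = b - a := ENNReal.toReal_ofReal (by linarith)
  -- bounds for A
  have hAne : A.Nonempty := nonempty_of_measure_ne_zero hApos.ne'
  obtain ⟨a, ha⟩ := hAb.bddBelow
  obtain ⟨b, hb⟩ := hAb.bddAbove
  have hfb : f b = m := by
    have : A ∩ Set.Iic b = A := Set.inter_eq_left.2 fun z hz => hb hz
    simp [hf, this, hm]
  have hflow : ∀ t : ℝ, t < a → f t = 0 := by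
    intro t ht
    have : A ∩ Set.Iic t = ∅ := by
      ext z
      simp only [Set.mem_inter_iff, Set.mem_Iic, Set.mem_empty_iff_false, iff_false]
      rintro ⟨hz, hzt⟩
      exact absurd ((ha hz).trans hzt) (not_le.2 ht)
    simp [hf, this]
  -- the generalized inverse
  set S : ℝ → Set ℝ := fun s => {t | s ≤ f t} with hS
  have hSne : ∀ s : ℝ, s ≤ m → (S s).Nonempty := fun s hs => ⟨b, by simpa [hS, hfb]⟩
  have hSbdd : ∀ s : ℝ, 0 < s → BddBelow (S s) := by
    intro s hs
    refine ⟨a, fun t ht => ?_⟩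
    by_contra h
    have := hflow t (not_le.1 h)
    simp only [hS, Set.mem_setOf_eq] at ht
    linarith
  set y : ℝ → ℝ := fun s => sInf (S s) with hy
  have hyval : ∀ s : ℝ, 0 < s → s ≤ m → f (y s) = s := by
    intro s hs hsm
    have hbdd := hSbdd s hs
    have hne := hSne s hsm
    have hge : s ≤ f (y s) := by
      refine le_of_forall_pos_le_add fun ε hε => ?_
      obtain ⟨t, htS, htlt⟩ := csInf_lt_iff hbdd hne |>.1 (lt_add_of_pos_right _ hε)
      have hyt : y s ≤ t := csInf_le hbdd htS
      have : f t - f (y s) ≤ t - y s := hlip _ _ hyt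
      have hts : s ≤ f t := htS
      linarith
    have hle : f (y s) ≤ s := by
      refine le_of_forall_pos_le_add fun ε hε => ?_
      have hnot : y s - ε ∉ S s := fun h =>
        absurd (csInf_le hbdd h) (by linarith)
      have h1 : f (y s - ε) < s := not_le.1 hnot
      have h2 : f (y s) - f (y s - ε) ≤ ε := by
        have := hlip (y s - ε) (y s) (by linarith)
        linarith
      linarith
    linarith
  have hycl : ∀ s : ℝ, 0 < s → s ≤ m → y s ∈ closure A := by
    intro s hs hsm
    rw [Metric.mem_closure_iff]
    intro ε hε
    have hbdd := hSbdd s hs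
    have hnot : y s - ε ∉ S s := fun h => absurd (csInf_le hbdd h) (by linarith)
    have h1 : f (y s - ε) < s := not_le.1 hnot
    have h2 : f (y s) = s := hyval s hs hsm
    have hpos : 0 < (volume (A ∩ Set.Ioc (y s - ε) (y s))).toReal := by
      rw [← hfdiff _ _ (by linarith : y s - ε ≤ y s)]; linarith
    have hne : (A ∩ Set.Ioc (y s - ε) (y s)).Nonempty := by
      refine nonempty_of_measure_ne_zero (μ := volume) fun h0 => ?_
      rw [h0] at hpos; simp at hpos
    obtain ⟨z, hzA, hz1, hz2⟩ := hne
    exact ⟨z, hzA, by rw [Real.dist_eq, abs_of_nonneg (by linarith)]; linarith⟩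
  have hygap : ∀ s s' : ℝ, 0 < s → s ≤ s' → s' ≤ m → s' - s ≤ y s' - y s := by
    intro s s' hs hss' hsm
    have h1 : f (y s) = s := hyval s hs (hss'.trans hsm)
    have h2 : f (y s') = s' := hyval s' (hs.trans_le hss') hsm
    have hyle : y s ≤ y s' := by
      refine csInf_le_csInf (hSbdd s hs) (hSne s' hsm) fun t ht => ?_
      exact le_trans hss' ht
    have := hlip (y s) (y s') hyle
    linarith
  -- assemble
  set d : ℝ := m / (n + 1) with hd
  have hdpos : 0 < d := div_pos hmpos (by positivity)
  have hkey : ∀ k : ℕ, k ≤ n + 1 → (k : ℝ) * d ≤ m := by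
    intro k hk
    have : (k : ℝ) ≤ (n : ℝ) + 1 := by exact_mod_cast hk
    calc (k : ℝ) * d ≤ ((n : ℝ) + 1) * d := by nlinarith
      _ = m := by rw [hd]; field_simp
  refine ⟨fun i => y ((i.val + 1) * d), fun i => ?_, ?_, ?_⟩
  · refine hycl _ (by positivity) (hkey (i.val + 1) (by omega) |>.trans_eq' ?_)
    push_cast; ring
  · intro i j hij
    have hij' : (i.val : ℝ) + 1 < (j.val : ℝ) + 1 := by
      have : i.val < j.val := hij
      exact_mod_cast Nat.add_lt_add_right this 1
    have h1 : 0 < ((i.val : ℝ) + 1) * d := by positivity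
    have h2 : ((i.val : ℝ) + 1) * d ≤ ((j.val : ℝ) + 1) * d := by nlinarith
    have h3 : ((j.val : ℝ) + 1) * d ≤ m := by
      have := hkey (j.val + 1) (by omega); push_cast at this; linarith
    have := hygap _ _ h1 h2 h3
    nlinarith
  · intro i
    have hcast : (i.castSucc.val : ℝ) = i.val := by simp
    have hsucc : (i.succ.val : ℝ) = i.val + 1 := by simp
    have h1 : 0 < ((i.val : ℝ) + 1) * d := by positivity
    have h2 : ((i.val : ℝ) + 1) * d ≤ ((i.val : ℝ) + 1 + 1) * d := by nlinarith
    have h3 : ((i.val : ℝ) + 1 + 1) * d ≤ m := by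
      have := hkey (i.val + 2) (by omega); push_cast at this; linarith
    have := hygap _ _ h1 h2 h3
    simp only [hcast, hsucc]
    have heq : ((i.val : ℝ) + 1 + 1) * d - ((i.val : ℝ) + 1) * d = d := by ring
    rw [hd] at *
    linarith [this, heq]
end

section
/- Let x_0 < x_1 < ⋯ < x_n be real numbers with x_i − x_{i−1} ≥ δ > 0 for all i. Then for each i ∈ {0, 1, …, n}, the product ∏_{j ≠ i} |x_i − x_j| ≥ i! (n−i)! δ^n. -/
open Finset

private lemma prod_succ_fact (m : ℕ) : ∏ k ∈ Finset.range m, (k + 1) = m.factorial := by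
  induction m with
  | zero => rfl
  | succ m ih => rw [Finset.prod_range_succ, ih, Nat.factorial_succ, mul_comm]

/-- For strictly increasing points with consecutive gaps at least `δ`, the nodal
products in Lagrange interpolation satisfy
`∏_{j ≠ i} |x_i - x_j| ≥ i! (n-i)! δ^n`. -/
theorem nodal_product_lower_bound (n : ℕ) (δ : ℝ) (hδ : 0 < δ)
    (x : Fin (n + 1) → ℝ) (hmono : StrictMono x)
    (hgap : ∀ i : Fin n, δ ≤ x i.succ - x i.castSucc) :
    ∀ i : Fin (n + 1),
      (Nat.factorial i : ℝ) * (Nat.factorial (n - i)) * δ ^ n ≤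
        ∏ j ∈ Finset.univ.erase i, |x i - x j| := by
  -- telescoping gap bound
  have key : ∀ k : ℕ, ∀ i j : Fin (n + 1), (j : ℕ) = (i : ℕ) + k →
      (k : ℝ) * δ ≤ x j - x i := by
    intro k
    induction k with
    | zero =>
      intro i j h
      have : j = i := Fin.ext (by omega)
      simp [this]
    | succ k ih =>
      intro i j h
      have hlt : (i : ℕ) + k < n := by omega
      set m : Fin n := ⟨(i : ℕ) + k, hlt⟩ with hm
      have h1 : (k : ℝ) * δ ≤ x m.castSucc - x i := ih i m.castSucc rfl
      have h2 : δ ≤ x j - x m.castSucc := by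
        have := hgap m
        have hj : j = m.succ := Fin.ext (by simp [hm, Fin.val_succ]; omega)
        rwa [hj]
      push_cast
      nlinarith
  have dist_bound : ∀ i j : Fin (n + 1),
      (Nat.dist (i : ℕ) (j : ℕ) : ℝ) * δ ≤ |x i - x j| := by
    intro i j
    rcases le_total (i : ℕ) (j : ℕ) with h | h
    · have := key ((j : ℕ) - (i : ℕ)) i j (by omega)
      rw [Nat.dist_eq_sub_of_le h]
      calc (((j : ℕ) - (i : ℕ) : ℕ) : ℝ) * δ ≤ x j - x i := this
        _ ≤ |x i - x j| := by rw [abs_sub_comm]; exact le_abs_self _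
    · have := key ((i : ℕ) - (j : ℕ)) j i (by omega)
      rw [Nat.dist_eq_sub_of_le_right h]
      calc (((i : ℕ) - (j : ℕ) : ℕ) : ℝ) * δ ≤ x i - x j := this
        _ ≤ |x i - x j| := le_abs_self _
  intro i
  have hcard : (Finset.univ.erase i).card = n := by
    simp [Finset.card_erase_of_mem]
  -- split the erased set
  have hsplit : Finset.univ.erase i =
      (Finset.univ.filter (· < i)) ∪ (Finset.univ.filter (i < ·)) := by
    ext j
    simp only [Finset.mem_erase, Finset.mem_union, Finset.mem_filter, Finset.mem_univ,
      true_and, and_true]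
    constructor
    · intro hj; exact lt_or_gt_of_ne hj
    · rintro (h | h) <;> exact (by intro he; subst he; exact absurd h (lt_irrefl _))
  have hdisj : Disjoint (Finset.univ.filter (· < i)) (Finset.univ.filter (i < ·)) := by
    simp only [Finset.disjoint_left, Finset.mem_filter]
    rintro a ⟨-, h1⟩ ⟨-, h2⟩
    exact absurd (h1.trans h2) (lt_irrefl a)
  -- nat product of distances
  have hlow : ∏ j ∈ Finset.univ.filter (· < i), Nat.dist (i : ℕ) (j : ℕ)
      = Nat.factorial i := by
    rw [← Nat.descFactorial_self, Nat.descFactorial_eq_prod_range]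
    refine Finset.prod_nbij' (f := fun j : Fin (n+1) => Nat.dist (i : ℕ) (j : ℕ))
      (g := fun k => (i : ℕ) - k) (fun j => (j : ℕ))
      (fun k => (⟨k % (n + 1), Nat.mod_lt _ (by omega)⟩ : Fin (n + 1))) ?_ ?_ ?_ ?_ ?_
    · intro a ha
      simp only [Finset.mem_filter, Finset.mem_univ, true_and, Fin.lt_def] at ha
      simp [Finset.mem_range, ha]
    · intro k hk
      simp only [Finset.mem_range] at hk
      have hk' : k < n + 1 := by omega
      simp only [Finset.mem_filter, Finset.mem_univ, true_and, Fin.lt_def]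
      simp [Nat.mod_eq_of_lt hk', hk]
    · intro a ha
      simp only [Finset.mem_filter, Finset.mem_univ, true_and, Fin.lt_def] at ha
      exact Fin.ext (by simp [Nat.mod_eq_of_lt (show (a : ℕ) < n + 1 by omega)])
    · intro k hk
      simp only [Finset.mem_range] at hk
      simp [Nat.mod_eq_of_lt (show k < n + 1 by omega)]
    · intro a ha
      simp only [Finset.mem_filter, Finset.mem_univ, true_and, Fin.lt_def] at ha
      exact Nat.dist_eq_sub_of_le_right (le_of_lt ha)
  have hhigh : ∏ j ∈ Finset.univ.filter (i < ·), Nat.dist (i : ℕ) (j : ℕ)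
      = Nat.factorial (n - i) := by
    rw [← prod_succ_fact]
    refine Finset.prod_nbij' (f := fun j : Fin (n+1) => Nat.dist (i : ℕ) (j : ℕ))
      (g := fun k => k + 1) (fun j => (j : ℕ) - (i : ℕ) - 1)
      (fun k => (⟨((i : ℕ) + k + 1) % (n + 1), Nat.mod_lt _ (by omega)⟩ : Fin (n + 1))) ?_ ?_ ?_ ?_ ?_
    · intro a ha
      simp only [Finset.mem_filter, Finset.mem_univ, true_and, Fin.lt_def] at ha
      have : (a : ℕ) < n + 1 := a.isLt
      simp only [Finset.mem_range]
      omega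
    · intro k hk
      simp only [Finset.mem_range] at hk
      have : (i : ℕ) + k + 1 < n + 1 := by omega
      simp only [Finset.mem_filter, Finset.mem_univ, true_and, Fin.lt_def]
      simp [Nat.mod_eq_of_lt this]
    · intro a ha
      simp only [Finset.mem_filter, Finset.mem_univ, true_and, Fin.lt_def] at ha
      have : (a : ℕ) < n + 1 := a.isLt
      exact Fin.ext (by simp [Nat.mod_eq_of_lt (show (i : ℕ) + ((a : ℕ) - (i : ℕ) - 1) + 1 < n + 1 by omega)]; omega)
    · intro k hk
      simp only [Finset.mem_range] at hk
      simp only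
      simp [Nat.mod_eq_of_lt (show (i : ℕ) + k + 1 < n + 1 by omega)]
      omega
    · intro a ha
      simp only [Finset.mem_filter, Finset.mem_univ, true_and, Fin.lt_def] at ha
      rw [Nat.dist_eq_sub_of_le (le_of_lt ha)]
      omega
  have hprod : ∏ j ∈ Finset.univ.erase i, Nat.dist (i : ℕ) (j : ℕ)
      = Nat.factorial i * Nat.factorial (n - i) := by
    rw [hsplit, Finset.prod_union hdisj, hlow, hhigh]
  -- main estimate
  calc (Nat.factorial i : ℝ) * (Nat.factorial (n - i)) * δ ^ n
      = ∏ j ∈ Finset.univ.erase i, ((Nat.dist (i : ℕ) (j : ℕ) : ℝ) * δ) := by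
        rw [Finset.prod_mul_distrib, Finset.prod_const, hcard, ← Nat.cast_prod, hprod]
        push_cast
        ring
    _ ≤ ∏ j ∈ Finset.univ.erase i, |x i - x j| := by
        apply Finset.prod_le_prod
        · intro j _; positivity
        · intro j _; exact dist_bound i j
end

section
/- Let x_0 < x_1 < ⋯ < x_n be points in an interval L of length at most ℓ with consecutive gaps at least δ > 0, and let f : L → ℝ with |f(x_i)| ≤ K for all i. Then the Lagrange interpolation polynomial P(t) = Σ_{i=0}^n f(x_i) ∏_{j≠i} (t − x_j)/(x_i − x_j) satisfies sup_{t ∈ L} |P(t)| ≤ K (ℓ/δ)^n Σ_{i=0}^n 1/(i!(n−i)!) = K (ℓ/δ)^n · 2^n/n!. -/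
open Finset

private lemma prod_range_sub_fact (m : ℕ) : ∏ j ∈ range m, (m - j) = Nat.factorial m := by
  rw [← Finset.prod_range_add_one_eq_factorial, ← Finset.prod_range_reflect (fun k => k + 1) m]
  apply Finset.prod_congr rfl
  intro j hj
  simp only [Finset.mem_range] at hj
  omega

private lemma erase_eq_Iio_union_Ioi (n : ℕ) (i : Fin (n + 1)) :
    (univ.erase i : Finset (Fin (n + 1))) = Finset.Iio i ∪ Finset.Ioi i := by
  ext j
  simp only [mem_erase, mem_union, mem_Iio, mem_Ioi, mem_univ, and_true]
  rw [Fin.lt_def, Fin.lt_def, Ne, Fin.ext_iff]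
  omega

private lemma prod_abs_sub_fact (n : ℕ) (i : Fin (n + 1)) :
    ∏ j ∈ univ.erase i, |((i : ℕ) : ℝ) - ((j : ℕ) : ℝ)| =
      ((Nat.factorial i * Nat.factorial (n - i) : ℕ) : ℝ) := by
  set G : ℕ → ℝ := fun k => |((i : ℕ) : ℝ) - (k : ℝ)| with hG
  have hdisj : Disjoint (Finset.Iio i) (Finset.Ioi i) := by
    rw [Finset.disjoint_left]
    intro j hj hj'
    simp only [mem_Iio, mem_Ioi] at hj hj'
    exact absurd hj' (not_lt.2 hj.le)
  rw [erase_eq_Iio_union_Ioi, Finset.prod_union hdisj]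
  have hIio : ∏ j ∈ Finset.Iio i, G (j : ℕ) = ∏ k ∈ range (i : ℕ), G k := by
    have h := Finset.prod_map (Finset.Iio i) Fin.valEmbedding G
    rw [Fin.map_valEmbedding_Iio, Nat.Iio_eq_range] at h
    exact h.symm
  have hIoi : ∏ j ∈ Finset.Ioi i, G (j : ℕ) = ∏ k ∈ Finset.Ioc (i : ℕ) n, G k := by
    have h := Finset.prod_map (Finset.Ioi i) Fin.valEmbedding G
    rw [Fin.map_valEmbedding_Ioi] at h
    rw [Finset.Ioo_add_one_right_eq_Ioc] at h
    exact h.symm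
  have h1 : ∏ k ∈ range (i : ℕ), G k = ((Nat.factorial i : ℕ) : ℝ) := by
    rw [← prod_range_sub_fact (i : ℕ), Nat.cast_prod]
    apply Finset.prod_congr rfl
    intro k hk
    simp only [Finset.mem_range] at hk
    show |((i:ℕ):ℝ) - (k:ℝ)| = (((i:ℕ) - k : ℕ) : ℝ)
    rw [Nat.cast_sub hk.le, abs_of_nonneg (sub_nonneg.2 (Nat.cast_le.2 hk.le))]
  have h2 : ∏ k ∈ Finset.Ioc (i : ℕ) n, G k = ((Nat.factorial (n - i) : ℕ) : ℝ) := by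
    rw [← Finset.Ico_add_one_add_one_eq_Ioc, Finset.prod_Ico_eq_prod_range]
    have hcard : n + 1 - ((i : ℕ) + 1) = n - i := by have := i.is_lt; omega
    rw [hcard, ← Finset.prod_range_add_one_eq_factorial (n - i), Nat.cast_prod]
    apply Finset.prod_congr rfl
    intro k _
    show |((i:ℕ):ℝ) - (((i:ℕ) + 1 + k : ℕ):ℝ)| = ((k + 1 : ℕ) : ℝ)
    rw [abs_sub_comm, abs_of_nonneg (by push_cast; linarith [Nat.cast_nonneg (α := ℝ) k])]
    push_cast; ring
  rw [hIio, hIoi, h1, h2]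
  push_cast
  ring

/-- Bound on the Lagrange interpolation polynomial through well-separated nodes:
if the nodes lie in an interval of length at most `ℓ`, have consecutive gaps at
least `δ`, and the interpolated values are bounded by `K`, then
`sup_L |P| ≤ K (ℓ/δ)^n · 2^n/n!`. -/
theorem lagrange_interpolant_bound (n : ℕ) (a b ℓ δ K : ℝ)
    (hab : a ≤ b) (hℓ : b - a ≤ ℓ) (hδ : 0 < δ) (hK : 0 ≤ K)
    (x : Fin (n + 1) → ℝ) (hx : ∀ i, x i ∈ Set.Icc a b) (hmono : StrictMono x)
    (hgap : ∀ i : Fin n, δ ≤ x i.succ - x i.castSucc)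
    (f : ℝ → ℝ) (hf : ∀ i, |f (x i)| ≤ K) :
    ∀ t ∈ Set.Icc a b,
      |∑ i : Fin (n + 1), f (x i) *
          (∏ j ∈ Finset.univ.erase i, (t - x j) / (x i - x j))| ≤
        K * (ℓ / δ) ^ n * (2 ^ n / Nat.factorial n) := by
  intro t ht
  have hℓ0 : 0 ≤ ℓ := le_trans (sub_nonneg.2 hab) hℓ
  -- telescoping gap bound
  have key : ∀ d k (h : k + d < n + 1), δ * d ≤ x ⟨k + d, h⟩ - x ⟨k, by omega⟩ := by
    intro d
    induction d with
    | zero => intro k h; simp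
    | succ d ih =>
      intro k h
      have h1 : k + d < n + 1 := by omega
      have hd : k + d < n := by omega
      have hg := hgap ⟨k + d, hd⟩
      have e1 : (⟨k + d, hd⟩ : Fin n).succ = (⟨k + d + 1, by omega⟩ : Fin (n+1)) := rfl
      have e2 : (⟨k + d, hd⟩ : Fin n).castSucc = (⟨k + d, h1⟩ : Fin (n+1)) := rfl
      rw [e1, e2] at hg
      have hih := ih k h1
      have : x ⟨k + (d+1), h⟩ = x ⟨k + d + 1, by omega⟩ := by congr 1
      rw [this]
      push_cast
      linarith
  -- separation of nodes
  have hsep : ∀ i j : Fin (n + 1), i ≠ j →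
      δ * |((i : ℕ) : ℝ) - ((j : ℕ) : ℝ)| ≤ |x i - x j| := by
    intro i j hij
    rcases lt_or_gt_of_ne hij with hlt | hlt
    · have hv : (i : ℕ) < (j : ℕ) := hlt
      have hk := key ((j : ℕ) - (i : ℕ)) (i : ℕ) (by omega)
      have ej : (⟨(i:ℕ) + ((j:ℕ) - (i:ℕ)), by omega⟩ : Fin (n+1)) = j := by
        apply Fin.ext; simp only [Fin.val_mk]; omega
      have ei : (⟨(i:ℕ), by omega⟩ : Fin (n+1)) = i := by apply Fin.ext; simp only [Fin.val_mk]
      rw [ej, ei] at hk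
      have habs1 : |((i:ℕ):ℝ) - ((j:ℕ):ℝ)| = ((j:ℕ):ℝ) - ((i:ℕ):ℝ) := by
        rw [abs_sub_comm, abs_of_nonneg (sub_nonneg.2 (Nat.cast_le.2 hv.le))]
      have habs2 : |x i - x j| = x j - x i := by
        rw [abs_sub_comm, abs_of_nonneg (by linarith [hmono hlt])]
      rw [habs1, habs2]
      have : (((j:ℕ) - (i:ℕ) : ℕ) : ℝ) = ((j:ℕ):ℝ) - ((i:ℕ):ℝ) := by
        push_cast [Nat.cast_sub hv.le]; ring
      linarith [this ▸ hk]
    · have hv : (j : ℕ) < (i : ℕ) := hlt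
      have hk := key ((i : ℕ) - (j : ℕ)) (j : ℕ) (by omega)
      have ei : (⟨(j:ℕ) + ((i:ℕ) - (j:ℕ)), by omega⟩ : Fin (n+1)) = i := by
        apply Fin.ext; simp only [Fin.val_mk]; omega
      have ej : (⟨(j:ℕ), by omega⟩ : Fin (n+1)) = j := by apply Fin.ext; simp only [Fin.val_mk]
      rw [ei, ej] at hk
      have habs1 : |((i:ℕ):ℝ) - ((j:ℕ):ℝ)| = ((i:ℕ):ℝ) - ((j:ℕ):ℝ) := by
        rw [abs_of_nonneg (sub_nonneg.2 (Nat.cast_le.2 hv.le))]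
      have habs2 : |x i - x j| = x i - x j := by
        rw [abs_of_nonneg (by linarith [hmono hlt])]
      rw [habs1, habs2]
      have : (((i:ℕ) - (j:ℕ) : ℕ) : ℝ) = ((i:ℕ):ℝ) - ((j:ℕ):ℝ) := by
        push_cast [Nat.cast_sub hv.le]; ring
      linarith [this ▸ hk]
  -- per-term bound
  have hterm : ∀ i : Fin (n + 1),
      |f (x i) * ∏ j ∈ Finset.univ.erase i, (t - x j) / (x i - x j)| ≤
        K * ((ℓ / δ) ^ n * ((n.choose i : ℝ) / (Nat.factorial n : ℝ))) := by
    intro i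
    rw [abs_mul]
    have hcard : (univ.erase i).card = n := by
      rw [Finset.card_erase_of_mem (mem_univ i), Finset.card_univ, Fintype.card_fin]
      rfl
    have hprod : |∏ j ∈ Finset.univ.erase i, (t - x j) / (x i - x j)| ≤
        (ℓ / δ) ^ n * ((n.choose i : ℝ) / (Nat.factorial n : ℝ)) := by
      rw [abs_prod]
      have hle : ∀ j ∈ univ.erase i, |(t - x j) / (x i - x j)| ≤
          ℓ / (δ * |((i:ℕ):ℝ) - ((j:ℕ):ℝ)|) := by
        intro j hj
        have hji : j ≠ i := (Finset.mem_erase.1 hj).1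
        have hne : ((i:ℕ):ℝ) ≠ ((j:ℕ):ℝ) := by
          simp only [Ne, Nat.cast_inj]
          exact fun h => hji.symm (Fin.ext h)
        have habs : 0 < |((i:ℕ):ℝ) - ((j:ℕ):ℝ)| := abs_pos.2 (sub_ne_zero.2 hne)
        have hden : 0 < δ * |((i:ℕ):ℝ) - ((j:ℕ):ℝ)| := mul_pos hδ habs
        rw [abs_div]
        apply div_le_div₀ hℓ0 _ hden (hsep i j hji.symm)
        rcases hx j with ⟨h1, h2⟩
        rcases ht with ⟨h3, h4⟩
        rw [abs_le]; constructor <;> linarith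
      calc ∏ j ∈ univ.erase i, |(t - x j) / (x i - x j)|
          ≤ ∏ j ∈ univ.erase i, ℓ / (δ * |((i:ℕ):ℝ) - ((j:ℕ):ℝ)|) :=
            Finset.prod_le_prod (fun j _ => abs_nonneg _) hle
        _ = (ℓ / δ) ^ n * ((n.choose i : ℝ) / (Nat.factorial n : ℝ)) := by
            rw [Finset.prod_div_distrib, Finset.prod_const, hcard,
              Finset.prod_mul_distrib, Finset.prod_const, hcard, prod_abs_sub_fact]
            rw [Nat.cast_choose ℝ (by omega : (i:ℕ) ≤ n), div_pow]
            have hfac : (Nat.factorial n : ℝ) ≠ 0 := by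
              exact_mod_cast Nat.factorial_ne_zero n
            have hfi : ((Nat.factorial i * Nat.factorial (n - i) : ℕ) : ℝ) ≠ 0 := by
              exact_mod_cast Nat.mul_ne_zero (Nat.factorial_ne_zero _) (Nat.factorial_ne_zero _)
            have hδn : δ ^ n ≠ 0 := pow_ne_zero _ (ne_of_gt hδ)
            push_cast at hfi ⊢
            field_simp
    exact mul_le_mul (hf i) hprod (abs_nonneg _) hK
  -- sum up
  calc |∑ i : Fin (n + 1), f (x i) * ∏ j ∈ Finset.univ.erase i, (t - x j) / (x i - x j)|
      ≤ ∑ i : Fin (n + 1), |f (x i) * ∏ j ∈ Finset.univ.erase i, (t - x j) / (x i - x j)| :=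
        Finset.abs_sum_le_sum_abs _ _
    _ ≤ ∑ i : Fin (n + 1), K * ((ℓ / δ) ^ n * ((n.choose i : ℝ) / (Nat.factorial n : ℝ))) :=
        Finset.sum_le_sum fun i _ => hterm i
    _ = K * (ℓ / δ) ^ n * (2 ^ n / Nat.factorial n) := by
        rw [← Finset.mul_sum]
        have : ∑ i : Fin (n + 1), ((n.choose (i : ℕ) : ℝ) / (Nat.factorial n : ℝ)) =
            (2 ^ n : ℝ) / (Nat.factorial n : ℝ) := by
          rw [← Finset.sum_div]
          congr 1
          rw [Fin.sum_univ_eq_sum_range (fun k => ((n.choose k : ℝ)))]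
          rw [← Nat.cast_sum]
          rw [Nat.sum_range_choose]
          push_cast; ring
        rw [← Finset.mul_sum, this]
        ring
end

section
/- Let Ω ⊆ ℝ^d be a bounded connected open set and suppose f : Ω → ℝ satisfies the doubling property ‖f‖_{L^∞(B_{2r}(x) ∩ Ω)} ≤ κ ‖f‖_{L^∞(B_r(x) ∩ Ω)} for all r ∈ (0, r_0] and x ∈ Ω with κ ≥ 2. Then there exists a constant C > 0 depending only on Ω, d, and r_0 such that for every x̂ ∈ Ω and r ∈ (0, r_0], ‖f‖_{L^∞(Ω)} ≤ (κ^C / r^{log₂ κ}) ‖f‖_{L^∞(B_r(x̂) ∩ Ω)}. -/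
open MeasureTheory

/-- Propagation of smallness to a ball via the doubling property: there is a constant
`C > 0`, depending only on `Ω`, `d`, `r₀`, such that any bounded `f` satisfying the
doubling property with constant `κ ≥ 2` obeys
`‖f‖_{L^∞(Ω)} ≤ κ^C r^{-log₂ κ} ‖f‖_{L^∞(B_r(xh) ∩ Ω)}` for all `xh ∈ Ω`, `r ∈ (0, r₀]`. -/
theorem doubling_propagation (d : ℕ) (Ω : Set (EuclideanSpace ℝ (Fin d)))
    (hΩo : IsOpen Ω) (hΩc : IsConnected Ω) (hΩb : Bornology.IsBounded Ω)
    (r₀ : ℝ) (hr₀ : r₀ ∈ Set.Ioc (0 : ℝ) 1) :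
    ∃ C : ℝ, 0 < C ∧
      ∀ (f : EuclideanSpace ℝ (Fin d) → ℝ) (K : ℝ), (∀ y ∈ Ω, |f y| ≤ K) →
      ∀ κ : ℝ, 2 ≤ κ →
      (∀ r ∈ Set.Ioc (0 : ℝ) r₀, ∀ x ∈ Ω,
        (⨆ y : (Metric.ball x (2 * r) ∩ Ω : Set (EuclideanSpace ℝ (Fin d))), |f y|) ≤
          κ * ⨆ y : (Metric.ball x r ∩ Ω : Set (EuclideanSpace ℝ (Fin d))), |f y|) →
      ∀ xh ∈ Ω, ∀ r ∈ Set.Ioc (0 : ℝ) r₀,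
        (⨆ y : Ω, |f y|) ≤
          κ ^ C / r ^ Real.logb 2 κ *
            ⨆ y : (Metric.ball xh r ∩ Ω : Set (EuclideanSpace ℝ (Fin d))), |f y| := by
  classical
  obtain ⟨hr₀0, hr₀1⟩ := hr₀
  obtain ⟨z₀, hz₀⟩ := hΩc.nonempty
  have hε : 0 < (r₀ / 10 : ℝ) := by positivity
  -- finite ε-net for Ω
  obtain ⟨t, ht_fin, ht_cov⟩ :=
    Metric.totallyBounded_iff.mp
      (hΩb.isCompact_closure.totallyBounded.subset subset_closure) (r₀ / 10) hε
  haveI : Fintype ↥t := ht_fin.fintype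
  -- for each point of the net, choose a nearby point of Ω (if any)
  have hq : ∀ p : EuclideanSpace ℝ (Fin d), ∃ z, z ∈ Ω ∧
      ((Metric.ball p (r₀ / 10) ∩ Ω).Nonempty → z ∈ Metric.ball p (r₀ / 10)) := by
    intro p
    by_cases h : (Metric.ball p (r₀ / 10) ∩ Ω).Nonempty
    · exact ⟨h.choose, h.choose_spec.2, fun _ => h.choose_spec.1⟩
    · exact ⟨z₀, hz₀, fun h' => absurd h' h⟩
  choose q hqΩ hq_ball using hq
  -- for each point of Ω, choose a net point covering it
  have hcov' : ∀ x ∈ Ω, ∃ p ∈ t, x ∈ Metric.ball p (r₀ / 10) := by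
    intro x hx
    simpa using ht_cov hx
  choose v hv₁ hv₂ using hcov'
  have hxq : ∀ x (hx : x ∈ Ω), dist x (q (v x hx)) < 2 * (r₀ / 10) := by
    intro x hx
    have h1 : dist x (v x hx) < r₀ / 10 := Metric.mem_ball.mp (hv₂ x hx)
    have h2 : dist (q (v x hx)) (v x hx) < r₀ / 10 :=
      Metric.mem_ball.mp (hq_ball (v x hx) ⟨x, hv₂ x hx, hx⟩)
    calc dist x (q (v x hx)) ≤ dist x (v x hx) + dist (v x hx) (q (v x hx)) :=
          dist_triangle _ _ _
      _ < 2 * (r₀ / 10) := by rw [dist_comm (v x hx)]; linarith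
  have hq5 : ∀ a b (ha : a ∈ Ω) (hb : b ∈ Ω), dist a b ≤ r₀ / 10 →
      dist (q (v a ha)) (q (v b hb)) ≤ r₀ / 2 := by
    intro a b ha hb hab
    have h1 := hxq a ha
    have h2 := hxq b hb
    calc dist (q (v a ha)) (q (v b hb)) ≤
        dist (q (v a ha)) a + dist a b + dist b (q (v b hb)) := dist_triangle4 _ _ _ _
      _ ≤ r₀ / 2 := by rw [dist_comm (q (v a ha)) a]; linarith
  -- the graph on the net
  let G : SimpleGraph ↥t :=
    { Adj := fun a b => a ≠ b ∧ dist (q ↑a) (q ↑b) ≤ r₀ / 2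
      symm := by
        constructor
        intro a b h
        exact ⟨h.1.symm, by rw [dist_comm]; exact h.2⟩
      loopless := by constructor; intro a h; exact h.1 rfl }
  -- ε-chain connectivity of Ω
  set R : EuclideanSpace ℝ (Fin d) → EuclideanSpace ℝ (Fin d) → Prop :=
    fun a b => a ∈ Ω ∧ b ∈ Ω ∧ dist a b ≤ r₀ / 10 with hR_def
  have hRTG : ∀ x ∈ Ω, ∀ y ∈ Ω, Relation.ReflTransGen R x y := by
    intro x hx y hy
    refine hΩc.isPreconnected.induction₂ (Relation.ReflTransGen R) ?_ ?_ ?_ hx hy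
    · intro z hz
      have hball : Metric.ball z (r₀ / 10) ∈ nhds z := Metric.ball_mem_nhds z hε
      filter_upwards [mem_nhdsWithin_of_mem_nhds hball, self_mem_nhdsWithin] with w hw hwΩ
      exact Relation.ReflTransGen.single ⟨hz, hwΩ, by
        rw [dist_comm]; exact le_of_lt (Metric.mem_ball.mp hw)⟩
    · intro a b c _ _ _ h1 h2
      exact h1.trans h2
    · intro a b _ _ h
      exact (haveI : Std.Symm R := ⟨
        (fun u w hw => ⟨hw.2.1, hw.1, by rw [dist_comm]; exact hw.2.2⟩)⟩; Relation.ReflTransGen.symmetric).symm _ _ h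
  -- transfer chains to graph reachability
  have hmap : ∀ x (hx : x ∈ Ω) y, Relation.ReflTransGen R x y → ∀ (hy : y ∈ Ω),
      Relation.ReflTransGen G.Adj ⟨v x hx, hv₁ x hx⟩ ⟨v y hy, hv₁ y hy⟩ := by
    intro x hx y hxy
    induction hxy with
    | refl => intro _; exact Relation.ReflTransGen.refl
    | @tail b c hab hbc ih =>
      intro hc
      have hb : b ∈ Ω := hbc.1
      by_cases he : (⟨v b hb, hv₁ b hb⟩ : ↥t) = ⟨v c hc, hv₁ c hc⟩
      · exact he ▸ (ih hb)
      · exact (ih hb).tail ⟨he, hq5 b c hb hc hbc.2.2⟩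
  -- uniformly bounded chains in Ω with step r₀/2
  have hchain : ∀ x ∈ Ω, ∀ y ∈ Ω, ∃ n ≤ Fintype.card ↥t + 1,
      ∃ u : ℕ → EuclideanSpace ℝ (Fin d), u 0 = x ∧ u n = y ∧ (∀ i, u i ∈ Ω) ∧
        ∀ i < n, dist (u i) (u (i + 1)) ≤ r₀ / 2 := by
    intro x hx y hy
    have hreach : G.Reachable ⟨v x hx, hv₁ x hx⟩ ⟨v y hy, hv₁ y hy⟩ :=
      (SimpleGraph.reachable_iff_reflTransGen _ _).mpr (hmap x hx y (hRTG x hx y hy) hy)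
    obtain ⟨w⟩ := hreach
    set p := w.bypass with hp_def
    have hpath : p.IsPath := w.bypass_isPath
    have hlen : p.length < Fintype.card ↥t := hpath.length_lt
    refine ⟨p.length + 2, by omega,
      fun i => if i = 0 then x else if i ≤ p.length + 1 then q ↑(p.getVert (i - 1)) else y,
      by simp, ?_, ?_, ?_⟩
    · dsimp only
      rw [if_neg (show ¬ (p.length + 2 = 0) by omega), if_neg (show ¬ (p.length + 2 ≤ p.length + 1) by omega)]
    · intro i
      dsimp only
      split_ifs
      · exact hx
      · exact hqΩ _
      · exact hy
    · intro i hi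
      dsimp only
      rcases Nat.eq_zero_or_pos i with h0 | h0
      · subst h0
        rw [Nat.zero_add]
        rw [if_pos rfl, if_neg one_ne_zero, if_pos (show 1 ≤ p.length + 1 by omega)]
        have : p.getVert (1 - 1) = ⟨v x hx, hv₁ x hx⟩ := p.getVert_zero
        rw [this]
        have := hxq x hx
        linarith
      · rcases Nat.lt_or_ge i (p.length + 1) with h1 | h1
        · -- interior step
          rw [if_neg (show ¬ (i = 0) by omega), if_pos (show i ≤ p.length + 1 by omega),
            if_neg (show ¬ (i + 1 = 0) by omega), if_pos (show i + 1 ≤ p.length + 1 by omega)]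
          have hadj := p.adj_getVert_succ (show i - 1 < p.length by omega)
          rw [show i - 1 + 1 = i by omega] at hadj
          rw [show i + 1 - 1 = i by omega]
          exact hadj.2
        · -- last step
          have hi' : i = p.length + 1 := by omega
          subst hi'
          rw [if_neg (show ¬ (p.length + 1 = 0) by omega),
            if_pos (show p.length + 1 ≤ p.length + 1 by omega),
            if_neg (show ¬ (p.length + 1 + 1 = 0) by omega),
            if_neg (show ¬ (p.length + 1 + 1 ≤ p.length + 1) by omega)]
          rw [show p.length + 1 - 1 = p.length from by omega, p.getVert_length]
          have := hxq y hy
          rw [dist_comm]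
          linarith
  -- the constant
  refine ⟨(Fintype.card ↥t : ℝ) + 3, by positivity, ?_⟩
  intro f K hK κ hκ hdbl xh hxh r hr
  obtain ⟨hr0, hrr₀⟩ := hr
  have hκ0 : (0 : ℝ) < κ := by linarith
  have hκ1 : (1 : ℝ) ≤ κ := by linarith
  set N₀ : ℕ := Fintype.card ↥t + 1 with hN₀
  -- basic sup facts
  have hbdd : ∀ s : Set (EuclideanSpace ℝ (Fin d)), s ⊆ Ω →
      BddAbove (Set.range fun y : s => |f ↑y|) := by
    intro s hs
    refine ⟨K, ?_⟩
    rintro z ⟨⟨y, hy⟩, rfl⟩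
    exact hK y (hs hy)
  have hmono : ∀ s u : Set (EuclideanSpace ℝ (Fin d)), s ⊆ u → u ⊆ Ω → s.Nonempty →
      (⨆ y : s, |f ↑y|) ≤ ⨆ y : u, |f ↑y| := by
    intro s u hsu huΩ hs
    haveI : Nonempty s := hs.to_subtype
    exact ciSup_le fun y => le_ciSup (hbdd u huΩ) ⟨y.1, hsu y.2⟩
  have hnonneg : ∀ s : Set (EuclideanSpace ℝ (Fin d)), s ⊆ Ω → s.Nonempty →
      0 ≤ ⨆ y : s, |f ↑y| := by
    rintro s hsΩ ⟨y, hy⟩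
    exact le_trans (abs_nonneg (f y)) (le_ciSup (hbdd s hsΩ) ⟨y, hy⟩)
  have hball_ne : ∀ x ∈ Ω, ∀ ρ : ℝ, 0 < ρ → (Metric.ball x ρ ∩ Ω).Nonempty := by
    intro x hx ρ hρ
    exact ⟨x, Metric.mem_ball_self hρ, hx⟩
  -- one doubling step along the chain
  have hstep : ∀ x ∈ Ω, ∀ y ∈ Ω, dist x y ≤ r₀ / 2 →
      (⨆ z : (Metric.ball y (r₀ / 2) ∩ Ω : Set (EuclideanSpace ℝ (Fin d))), |f ↑z|) ≤
        κ * ⨆ z : (Metric.ball x (r₀ / 2) ∩ Ω : Set (EuclideanSpace ℝ (Fin d))), |f ↑z| := by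
    intro x hx y hy hxy
    have hsub : Metric.ball y (r₀ / 2) ⊆ Metric.ball x (2 * (r₀ / 2)) := by
      intro z hz
      rw [Metric.mem_ball] at hz ⊢
      calc dist z x ≤ dist z y + dist y x := dist_triangle _ _ _
        _ < 2 * (r₀ / 2) := by rw [dist_comm y x]; linarith
    refine le_trans (hmono _ _ (Set.inter_subset_inter_left Ω hsub) Set.inter_subset_right
      (hball_ne y hy _ (by positivity))) ?_
    exact hdbl (r₀ / 2) ⟨by positivity, by linarith⟩ x hx
  -- iterate along a chain
  have hchainest : ∀ (n : ℕ) (u : ℕ → EuclideanSpace ℝ (Fin d)), (∀ i, u i ∈ Ω) →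
      (∀ i < n, dist (u i) (u (i + 1)) ≤ r₀ / 2) →
      (⨆ z : (Metric.ball (u n) (r₀ / 2) ∩ Ω : Set (EuclideanSpace ℝ (Fin d))), |f ↑z|) ≤
        κ ^ n * ⨆ z : (Metric.ball (u 0) (r₀ / 2) ∩ Ω : Set (EuclideanSpace ℝ (Fin d))), |f ↑z| := by
    intro n
    induction n with
    | zero => intro u _ _; simp
    | succ n ih =>
      intro u hu hd
      calc (⨆ z : (Metric.ball (u (n + 1)) (r₀ / 2) ∩ Ω :
            Set (EuclideanSpace ℝ (Fin d))), |f ↑z|) ≤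
          κ * ⨆ z : (Metric.ball (u n) (r₀ / 2) ∩ Ω :
            Set (EuclideanSpace ℝ (Fin d))), |f ↑z| :=
            hstep (u n) (hu n) (u (n + 1)) (hu (n + 1)) (hd n (Nat.lt_succ_self n))
        _ ≤ κ * (κ ^ n * ⨆ z : (Metric.ball (u 0) (r₀ / 2) ∩ Ω :
            Set (EuclideanSpace ℝ (Fin d))), |f ↑z|) :=
            mul_le_mul_of_nonneg_left (ih u hu fun i hi => hd i (hi.trans (Nat.lt_succ_self n)))
              (le_of_lt hκ0)
        _ = κ ^ (n + 1) * ⨆ z : (Metric.ball (u 0) (r₀ / 2) ∩ Ω :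
            Set (EuclideanSpace ℝ (Fin d))), |f ↑z| := by ring
  -- global bound by the sup on the half-ball at xh
  have hSxh_ne : (Metric.ball xh (r₀ / 2) ∩ Ω).Nonempty := hball_ne xh hxh _ (by positivity)
  have hglobal : (⨆ y : Ω, |f ↑y|) ≤ κ ^ N₀ *
      ⨆ z : (Metric.ball xh (r₀ / 2) ∩ Ω : Set (EuclideanSpace ℝ (Fin d))), |f ↑z| := by
    haveI : Nonempty ↥Ω := ⟨⟨xh, hxh⟩⟩
    refine ciSup_le ?_
    rintro ⟨x, hx⟩
    obtain ⟨n, hn, u, hu0, hun, huΩ, hud⟩ := hchain xh hxh x hx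
    have h1 : |f x| ≤ ⨆ z : (Metric.ball x (r₀ / 2) ∩ Ω :
        Set (EuclideanSpace ℝ (Fin d))), |f ↑z| :=
      le_ciSup (hbdd _ Set.inter_subset_right)
        (⟨x, Metric.mem_ball_self (by positivity), hx⟩ :
          (Metric.ball x (r₀ / 2) ∩ Ω : Set (EuclideanSpace ℝ (Fin d))))
    have h2 := hchainest n u huΩ hud
    rw [hu0, hun] at h2
    have h3 : κ ^ n ≤ κ ^ N₀ := pow_le_pow_right₀ hκ1 hn
    calc |f x| ≤ _ := h1
      _ ≤ κ ^ n * ⨆ z : (Metric.ball xh (r₀ / 2) ∩ Ω :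
          Set (EuclideanSpace ℝ (Fin d))), |f ↑z| := h2
      _ ≤ κ ^ N₀ * ⨆ z : (Metric.ball xh (r₀ / 2) ∩ Ω :
          Set (EuclideanSpace ℝ (Fin d))), |f ↑z| :=
          mul_le_mul_of_nonneg_right h3 (hnonneg _ Set.inter_subset_right hSxh_ne)
  -- shrinking from r₀/2 to r at xh
  have hshrink : ∀ j : ℕ, (∀ i < j, 2 ^ i * r ≤ r₀) →
      (⨆ z : (Metric.ball xh (2 ^ j * r) ∩ Ω : Set (EuclideanSpace ℝ (Fin d))), |f ↑z|) ≤
        κ ^ j * ⨆ z : (Metric.ball xh r ∩ Ω : Set (EuclideanSpace ℝ (Fin d))), |f ↑z| := by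
    intro j
    induction j with
    | zero =>
      intro _
      rw [show (2:ℝ) ^ 0 * r = r by norm_num, pow_zero, one_mul]
    | succ j ih =>
      intro h
      have h2 : (2 : ℝ) ^ j * r ≤ r₀ := h j (Nat.lt_succ_self j)
      have hrad : (2 : ℝ) ^ (j + 1) * r = 2 * (2 ^ j * r) := by ring
      rw [hrad]
      calc (⨆ z : (Metric.ball xh (2 * (2 ^ j * r)) ∩ Ω :
            Set (EuclideanSpace ℝ (Fin d))), |f ↑z|) ≤
          κ * ⨆ z : (Metric.ball xh (2 ^ j * r) ∩ Ω :
            Set (EuclideanSpace ℝ (Fin d))), |f ↑z| :=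
            hdbl (2 ^ j * r) ⟨by positivity, h2⟩ xh hxh
        _ ≤ κ * (κ ^ j * ⨆ z : (Metric.ball xh r ∩ Ω :
            Set (EuclideanSpace ℝ (Fin d))), |f ↑z|) :=
            mul_le_mul_of_nonneg_left
              (ih fun i hi => h i (hi.trans (Nat.lt_succ_self j))) (le_of_lt hκ0)
        _ = κ ^ (j + 1) * ⨆ z : (Metric.ball xh r ∩ Ω :
            Set (EuclideanSpace ℝ (Fin d))), |f ↑z| := by ring
  set m : ℕ := ⌈Real.logb 2 (r₀ / (2 * r))⌉₊ with hm_def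
  have hpos2r : (0 : ℝ) < r₀ / (2 * r) := by positivity
  have hm1 : r₀ / 2 ≤ 2 ^ m * r := by
    have h1 : Real.logb 2 (r₀ / (2 * r)) ≤ (m : ℝ) := Nat.le_ceil _
    have h2 : r₀ / (2 * r) = (2 : ℝ) ^ Real.logb 2 (r₀ / (2 * r)) :=
      (Real.rpow_logb (by norm_num) (by norm_num) hpos2r).symm
    have h3 : r₀ / (2 * r) ≤ (2 : ℝ) ^ (m : ℝ) := by
      rw [h2]
      exact Real.rpow_le_rpow_of_exponent_le one_le_two h1
    rw [Real.rpow_natCast] at h3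
    rw [div_le_iff₀ (by positivity : (0:ℝ) < 2 * r)] at h3
    linarith
  have hm2 : ∀ i < m, 2 ^ i * r ≤ r₀ := by
    intro i hi
    have h1 : (i : ℝ) < Real.logb 2 (r₀ / (2 * r)) := Nat.lt_ceil.mp hi
    have h2 : (2 : ℝ) ^ (i : ℝ) < (2 : ℝ) ^ Real.logb 2 (r₀ / (2 * r)) :=
      Real.rpow_lt_rpow_of_exponent_lt one_lt_two h1
    rw [Real.rpow_natCast, Real.rpow_logb (by norm_num) (by norm_num) hpos2r] at h2
    rw [lt_div_iff₀ (by positivity : (0:ℝ) < 2 * r)] at h2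
    nlinarith
  have hhalf : (⨆ z : (Metric.ball xh (r₀ / 2) ∩ Ω : Set (EuclideanSpace ℝ (Fin d))), |f ↑z|) ≤
      κ ^ m * ⨆ z : (Metric.ball xh r ∩ Ω : Set (EuclideanSpace ℝ (Fin d))), |f ↑z| := by
    refine le_trans (hmono _ _ (Set.inter_subset_inter_left Ω (Metric.ball_subset_ball hm1))
      Set.inter_subset_right hSxh_ne) (hshrink m hm2)
  have hSr_ne : (Metric.ball xh r ∩ Ω).Nonempty := hball_ne xh hxh r hr0
  have hSr_nonneg : 0 ≤ ⨆ z : (Metric.ball xh r ∩ Ω :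
      Set (EuclideanSpace ℝ (Fin d))), |f ↑z| := hnonneg _ Set.inter_subset_right hSr_ne
  -- exponent arithmetic
  have hlogr : Real.logb 2 r ≤ 0 :=
    Real.logb_nonpos one_lt_two (le_of_lt hr0) (le_trans hrr₀ hr₀1)
  have hmle : (m : ℝ) ≤ 2 - Real.logb 2 r := by
    rcases Nat.eq_zero_or_pos m with h0 | h0
    · rw [h0]; push_cast; linarith
    · have hL : 0 < Real.logb 2 (r₀ / (2 * r)) := Nat.ceil_pos.mp h0
      have h1 : (m : ℝ) < Real.logb 2 (r₀ / (2 * r)) + 1 :=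
        Nat.ceil_lt_add_one (le_of_lt hL)
      have h2 : Real.logb 2 (r₀ / (2 * r)) =
          Real.logb 2 r₀ - (1 + Real.logb 2 r) := by
        rw [Real.logb_div (ne_of_gt hr₀0) (by positivity),
          Real.logb_mul (by norm_num) (ne_of_gt hr0), Real.logb_self_eq_one] <;> norm_num
      have h3 : Real.logb 2 r₀ ≤ 0 :=
        Real.logb_nonpos one_lt_two (le_of_lt hr₀0) hr₀1
      rw [h2] at h1
      linarith
  have hexp : κ ^ (N₀ + m) ≤ κ ^ ((Fintype.card ↥t : ℝ) + 3) / r ^ Real.logb 2 κ := by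
    have hswap : κ ^ Real.logb 2 r = r ^ Real.logb 2 κ := by
      rw [Real.rpow_def_of_pos hκ0, Real.rpow_def_of_pos hr0, Real.logb, Real.logb]
      congr 1
      ring
    have h1 : (κ : ℝ) ^ (N₀ + m) = κ ^ ((N₀ + m : ℕ) : ℝ) := (Real.rpow_natCast κ _).symm
    have h2 : κ ^ ((N₀ + m : ℕ) : ℝ) ≤ κ ^ ((Fintype.card ↥t : ℝ) + 3 - Real.logb 2 r) := by
      refine Real.rpow_le_rpow_of_exponent_le hκ1 ?_
      push_cast [hN₀]
      linarith
    have h3 : κ ^ ((Fintype.card ↥t : ℝ) + 3 - Real.logb 2 r) =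
        κ ^ ((Fintype.card ↥t : ℝ) + 3) / r ^ Real.logb 2 κ := by
      rw [Real.rpow_sub hκ0, hswap]
    calc κ ^ (N₀ + m) = κ ^ ((N₀ + m : ℕ) : ℝ) := h1
      _ ≤ κ ^ ((Fintype.card ↥t : ℝ) + 3 - Real.logb 2 r) := h2
      _ = κ ^ ((Fintype.card ↥t : ℝ) + 3) / r ^ Real.logb 2 κ := h3
  calc (⨆ y : Ω, |f ↑y|) ≤ κ ^ N₀ *
        ⨆ z : (Metric.ball xh (r₀ / 2) ∩ Ω : Set (EuclideanSpace ℝ (Fin d))), |f ↑z| := hglobal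
    _ ≤ κ ^ N₀ * (κ ^ m *
        ⨆ z : (Metric.ball xh r ∩ Ω : Set (EuclideanSpace ℝ (Fin d))), |f ↑z|) :=
        mul_le_mul_of_nonneg_left hhalf (by positivity)
    _ = κ ^ (N₀ + m) *
        ⨆ z : (Metric.ball xh r ∩ Ω : Set (EuclideanSpace ℝ (Fin d))), |f ↑z| := by
        rw [pow_add]; ring
    _ ≤ κ ^ ((Fintype.card ↥t : ℝ) + 3) / r ^ Real.logb 2 κ *
        ⨆ z : (Metric.ball xh r ∩ Ω : Set (EuclideanSpace ℝ (Fin d))), |f ↑z| :=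
        mul_le_mul_of_nonneg_right hexp hSr_nonneg
end

section
/- Let x ∈ ℝ^d lie on a C¹ boundary portion given locally as a graph {z_d = φ(z')} with Lipschitz constant at most 1/100, with the domain lying above the graph. Let r > 0 be small enough that B_r(x) is contained in the coordinate chart, and set x̃ = x + (r/2) e_d. Then B_{r/10}(x̃) is contained in the domain {z_d > φ(z')}, and every ray starting from any point of B_{r/10}(x̃) intersects the graph {z_d = φ(z')} ∩ B_r(x) in at most one point. -/
/-- Near a graph with Lipschitz constant at most `1/100`, the shifted ball
`B_{r/10}(x̃)` with `x̃ = x + (r/2) e_d` lies in the domain `{z_d > φ(z')}`, and every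
ray from a point of `B_{r/10}(x̃)` meets the graph inside `B_r(x)` at most once. -/
theorem ray_meets_graph_once (k : ℕ)
    (φ : EuclideanSpace ℝ (Fin k) → ℝ)
    (hφ : ∀ z₁ z₂, |φ z₁ - φ z₂| ≤ (1 / 100) * ‖z₁ - z₂‖)
    (x : EuclideanSpace ℝ (Fin k) × ℝ) (hx : φ x.1 < x.2) (r : ℝ) (hr : 0 < r) :
    Metric.ball (x.1, x.2 + r / 2) (r / 10) ⊆
        {p : EuclideanSpace ℝ (Fin k) × ℝ | φ p.1 < p.2} ∧
      ∀ w ∈ Metric.ball (x.1, x.2 + r / 2) (r / 10),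
        ∀ μ : EuclideanSpace ℝ (Fin k) × ℝ, ‖μ‖ = 1 →
          {t : ℝ | 0 ≤ t ∧ (w + t • μ).2 = φ (w + t • μ).1 ∧
            w + t • μ ∈ Metric.ball x r}.Subsingleton := by
  have hc : ∀ a b, φ a ≤ φ b + ‖a - b‖ / 100 := by
    intro a b
    have h := le_trans (le_abs_self (φ a - φ b)) (hφ a b)
    linarith
  constructor
  · intro p hp
    rw [Metric.mem_ball, Prod.dist_eq, max_lt_iff] at hp
    have h1 : ‖p.1 - x.1‖ < r / 10 := by
      simpa [dist_eq_norm] using hp.1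
    have h2 : |p.2 - (x.2 + r / 2)| < r / 10 := by
      simpa [Real.dist_eq] using hp.2
    have h3 := hc p.1 x.1
    have h4 := abs_lt.mp h2
    simp only [Set.mem_setOf_eq]
    nlinarith [h4.1, h4.2, norm_nonneg (p.1 - x.1)]
  · intro w hw μ hμ t₁ ht₁ t₂ ht₂
    by_contra hne
    rw [Metric.mem_ball, Prod.dist_eq, max_lt_iff] at hw
    have hw1 : ‖w.1 - x.1‖ < r / 10 := by
      simpa [dist_eq_norm] using hw.1
    have hw2 : |w.2 - (x.2 + r / 2)| < r / 10 := by
      simpa [Real.dist_eq] using hw.2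
    obtain ⟨hw2a, hw2b⟩ := abs_lt.mp hw2
    simp only [Set.mem_setOf_eq, Prod.fst_add, Prod.snd_add, Prod.smul_fst,
      Prod.smul_snd, smul_eq_mul] at ht₁ ht₂
    obtain ⟨ht₁0, he₁, hb₁⟩ := ht₁
    obtain ⟨ht₂0, he₂, hb₂⟩ := ht₂
    have hμ1 : ‖μ.1‖ ≤ 1 := hμ ▸ (by rw [Prod.norm_def]; exact le_max_left _ _)
    -- |μ.2| ≤ 1/100 from the two distinct hits
    have hkey : |μ.2| ≤ 1 / 100 := by
      have h := hφ (w.1 + t₁ • μ.1) (w.1 + t₂ • μ.1)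
      have hsub : (w.1 + t₁ • μ.1) - (w.1 + t₂ • μ.1) = (t₁ - t₂) • μ.1 := by
        rw [sub_smul]; abel
      rw [hsub, norm_smul, Real.norm_eq_abs, ← he₁, ← he₂] at h
      have h' : |t₁ - t₂| * |μ.2| ≤ 1 / 100 * (|t₁ - t₂| * ‖μ.1‖) := by
        calc |t₁ - t₂| * |μ.2| = |(w.2 + t₁ * μ.2) - (w.2 + t₂ * μ.2)| := by
              rw [← abs_mul]; ring_nf
          _ ≤ _ := h
      have hpos : 0 < |t₁ - t₂| := abs_pos.mpr (sub_ne_zero.mpr hne)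
      have : |t₁ - t₂| * |μ.2| ≤ |t₁ - t₂| * (1 / 100) := by
        nlinarith
      exact le_of_mul_le_mul_left (by linarith [this]) hpos
    obtain ⟨hk1, hk2⟩ := abs_le.mp hkey
    have hμ1' : ‖μ.1‖ = 1 := by
      rw [Prod.norm_def, Real.norm_eq_abs] at hμ
      rcases max_cases ‖μ.1‖ |μ.2| with ⟨h, _⟩ | ⟨h, _⟩
      · rw [h] at hμ; exact hμ
      · rw [h] at hμ; linarith [hkey, hμ]
    -- margin: w.2 - φ w.1 > 0.399 r
    have hφw : φ w.1 ≤ x.2 + r / 1000 := by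
      have := hc w.1 x.1
      nlinarith
    -- hit equation at t₁ gives lower bound on t₁
    have hupper : φ (w.1 + t₁ • μ.1) ≤ φ w.1 + t₁ / 100 := by
      have := hc (w.1 + t₁ • μ.1) w.1
      have hn : ‖(w.1 + t₁ • μ.1) - w.1‖ = t₁ := by
        rw [add_sub_cancel_left, norm_smul, Real.norm_eq_abs, hμ1',
          abs_of_nonneg ht₁0, mul_one]
      rw [hn] at this
      linarith
    -- the hit point lies in the ball of radius r around x: first-coordinate bound
    rw [Metric.mem_ball, Prod.dist_eq, max_lt_iff] at hb₁
    have hb1' : ‖w.1 + t₁ • μ.1 - x.1‖ < r := by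
      simpa [dist_eq_norm] using hb₁.1
    have ht₁small : t₁ < r + r / 10 := by
      have : t₁ = ‖t₁ • μ.1‖ := by
        rw [norm_smul, Real.norm_eq_abs, hμ1', abs_of_nonneg ht₁0, mul_one]
      have htri : ‖t₁ • μ.1‖ ≤ ‖w.1 + t₁ • μ.1 - x.1‖ + ‖w.1 - x.1‖ := by
        calc ‖t₁ • μ.1‖ = ‖(w.1 + t₁ • μ.1 - x.1) - (w.1 - x.1)‖ := by
              congr 1; abel
          _ ≤ _ := norm_sub_le _ _
      linarith
    -- hit equation: w.2 + t₁ μ.2 = φ(w.1 + t₁ μ.1) ≤ φ w.1 + t₁/100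
    -- so t₁ (μ.2 - 1/100) ≤ φ w.1 - w.2 < -(0.399 r), with μ.2 ≥ -1/100
    nlinarith [he₁, hupper, hφw, hw2a, mul_le_mul_of_nonneg_left hk1 ht₁0]
end

section
/- Let L ⊆ ℝ be an interval with |L| ≤ 2r and let x_0, …, x_n ∈ L satisfy x_i − x_{i−1} ≥ ε r/(n+1) for some ε ∈ (0, 1]. If |f(x_i)| ≤ K for all i, then the Lagrange interpolant P of these values satisfies ‖P‖_{L^∞(L)} ≤ K Σ_{i=0}^n (2r)^n (n+1)^n / (i!(n−i)! (ε r)^n) ≤ K (C/ε)^{n+1} for an absolute constant C > 0. -/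
open Finset

private lemma prod_sub_fact : ∀ m : ℕ, ∏ j ∈ range m, (m - j) = m.factorial := by
  intro m
  induction m with
  | zero => simp
  | succ m ih =>
    rw [Finset.prod_range_succ']
    simp only [Nat.add_sub_add_right, Nat.sub_zero]
    rw [ih, Nat.factorial_succ]; ring

private lemma prod_abs_fact (n i : ℕ) (h : i ≤ n) :
    ∏ j ∈ (range (n+1)).erase i, |(i:ℝ) - j| =
      (i.factorial : ℝ) * (n - i).factorial := by
  have hsplit : (range (n+1)).erase i = range i ∪ Ico (i+1) (n+1) := by
    ext a
    simp only [mem_erase, mem_range, mem_union, mem_Ico]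
    omega
  rw [hsplit, Finset.prod_union (by
    simp only [Finset.disjoint_left, mem_range, mem_Ico]; omega)]
  have h1 : ∏ j ∈ range i, |(i:ℝ) - j| = (i.factorial : ℝ) := by
    rw [← prod_sub_fact i, Nat.cast_prod]
    refine Finset.prod_congr rfl fun j hj => ?_
    have hji : j ≤ i := (mem_range.mp hj).le
    rw [Nat.cast_sub hji, abs_of_nonneg (by simp [sub_nonneg, Nat.cast_le, hji])]
  have h2 : ∏ j ∈ Ico (i+1) (n+1), |(i:ℝ) - j| = ((n-i).factorial : ℝ) := by
    have : ∏ j ∈ Ico (i+1) (n+1), (j - i) = (n-i).factorial := by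
      rw [Finset.prod_Ico_eq_prod_range]
      have hr : n + 1 - (i + 1) = n - i := by omega
      rw [hr, ← Finset.prod_range_add_one_eq_factorial]
      exact Finset.prod_congr rfl fun k _ => by omega
    rw [← this, Nat.cast_prod]
    refine Finset.prod_congr rfl fun j hj => ?_
    have hij : i ≤ j := by have := (mem_Ico.mp hj).1; omega
    rw [Nat.cast_sub hij, abs_sub_comm,
      abs_of_nonneg (by simp [sub_nonneg, Nat.cast_le, hij])]
  rw [h1, h2]

private lemma prod_fin_erase {n : ℕ} (i : Fin (n+1)) (F : ℕ → ℝ) :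
    ∏ j ∈ Finset.univ.erase i, F (j : ℕ) =
      ∏ j ∈ (range (n+1)).erase (i : ℕ), F j := by
  have himg : (range (n+1)).erase (i : ℕ) =
      (Finset.univ.erase i).image (Fin.val) := by
    ext a
    simp only [mem_erase, mem_range, mem_image, mem_univ, and_true]
    constructor
    · rintro ⟨ha, hlt⟩
      exact ⟨⟨a, hlt⟩, by simpa [Fin.ext_iff] using ha, rfl⟩
    · rintro ⟨b, hb, rfl⟩
      exact ⟨by simpa [Fin.ext_iff] using hb, b.isLt⟩
  rw [himg, Finset.prod_image (fun a _ b _ h => Fin.val_injective h)]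

private lemma pow3 : ∀ n : ℕ, ((n:ℝ)+1)^n ≤ 3^n * n.factorial := by
  intro n
  induction n with
  | zero => norm_num
  | succ n ih =>
    have hpos : (0:ℝ) < (n:ℝ) + 1 := by positivity
    have hexp : (1 + 1/((n:ℝ)+1))^(n+1) ≤ 3 := by
      have h1 : (1 + 1/((n:ℝ)+1)) ≤ Real.exp (1/((n:ℝ)+1)) := by
        have := Real.add_one_le_exp (1/((n:ℝ)+1)); linarith
      have h2 : (1 + 1/((n:ℝ)+1))^(n+1) ≤ (Real.exp (1/((n:ℝ)+1)))^(n+1) :=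
        pow_le_pow_left₀ (by positivity) h1 _
      have h3 : (Real.exp (1/((n:ℝ)+1)))^(n+1) = Real.exp 1 := by
        rw [← Real.exp_nat_mul]
        congr 1
        field_simp
        exact Nat.cast_succ n
      have h4 : Real.exp 1 ≤ 3 := by
        have := Real.exp_one_lt_d9; linarith
      calc (1 + 1/((n:ℝ)+1))^(n+1) ≤ (Real.exp (1/((n:ℝ)+1)))^(n+1) := h2
        _ = Real.exp 1 := h3
        _ ≤ 3 := h4
    have key : ((n:ℝ)+1+1)^(n+1) = ((n:ℝ)+1)^(n+1) * (1 + 1/((n:ℝ)+1))^(n+1) := by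
      rw [← mul_pow]
      congr 1
      field_simp
    push_cast
    rw [key]
    have h5 : ((n:ℝ)+1)^(n+1) * (1 + 1/((n:ℝ)+1))^(n+1) ≤ ((n:ℝ)+1)^(n+1) * 3 :=
      mul_le_mul_of_nonneg_left hexp (by positivity)
    have h6 : ((n:ℝ)+1)^(n+1) = ((n:ℝ)+1) * ((n:ℝ)+1)^n := by ring
    have h7 : ((n:ℝ)+1) * ((n:ℝ)+1)^n ≤ ((n:ℝ)+1) * (3^n * n.factorial) :=
      mul_le_mul_of_nonneg_left ih (by positivity)
    calc ((n:ℝ)+1)^(n+1) * (1 + 1/((n:ℝ)+1))^(n+1)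
        ≤ ((n:ℝ)+1)^(n+1) * 3 := h5
      _ = (((n:ℝ)+1) * ((n:ℝ)+1)^n) * 3 := by rw [h6]
      _ ≤ (((n:ℝ)+1) * (3^n * n.factorial)) * 3 :=
          mul_le_mul_of_nonneg_right h7 (by norm_num)
      _ = 3^(n+1) * (((n:ℝ)+1) * n.factorial) := by ring
      _ = 3^(n+1) * ((n+1).factorial) := by
          rw [Nat.factorial_succ]; push_cast; ring

private lemma gap_aux {n : ℕ} (x : Fin (n+1) → ℝ) (δ : ℝ)
    (h : ∀ k : Fin n, δ ≤ x k.succ - x k.castSucc) :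
    ∀ (d : ℕ) (a b : Fin (n+1)), (b : ℕ) = a + d → (d:ℝ) * δ ≤ x b - x a := by
  intro d
  induction d with
  | zero =>
    intro a b hb
    have : b = a := Fin.ext (by omega)
    simp [this]
  | succ d ih =>
    intro a b hb
    have hd : (a : ℕ) + d < n := by have := b.isLt; omega
    set k : Fin n := ⟨(a:ℕ) + d, hd⟩ with hk
    have h1 : (d:ℝ) * δ ≤ x k.castSucc - x a := ih a k.castSucc (by simp [hk])
    have h2 := h k
    have hb2 : b = k.succ := Fin.ext (by simp [hk, Fin.val_succ]; omega)
    rw [hb2]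
    push_cast
    linarith

/-- Quantitative bound on the Lagrange interpolant with gap `ε r/(n+1)`: there is an
absolute constant `C > 0` such that
`‖P‖_{L^∞(L)} ≤ K Σᵢ (2r)ⁿ (n+1)ⁿ/(i!(n-i)!(εr)ⁿ) ≤ K (C/ε)^{n+1}`. -/
theorem lagrange_bound_eps : ∃ C : ℝ, 0 < C ∧
    ∀ (r ε : ℝ) (n : ℕ) (c e : ℝ) (x : Fin (n + 1) → ℝ) (f : ℝ → ℝ) (K : ℝ),
      0 < r → ε ∈ Set.Ioc (0 : ℝ) 1 → c ≤ e → e - c ≤ 2 * r →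
      (∀ i, x i ∈ Set.Icc c e) → StrictMono x →
      (∀ i : Fin n, ε * r / (n + 1) ≤ x i.succ - x i.castSucc) →
      0 ≤ K → (∀ i, |f (x i)| ≤ K) →
      ∀ t ∈ Set.Icc c e,
        (|∑ i : Fin (n + 1), f (x i) *
            (∏ j ∈ Finset.univ.erase i, (t - x j) / (x i - x j))| ≤
          K * ∑ i : Fin (n + 1),
            (2 * r) ^ n * ((n : ℝ) + 1) ^ n /
              ((Nat.factorial i) * (Nat.factorial (n - i)) * (ε * r) ^ n)) ∧
        K * (∑ i : Fin (n + 1),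
            (2 * r) ^ n * ((n : ℝ) + 1) ^ n /
              ((Nat.factorial i) * (Nat.factorial (n - i)) * (ε * r) ^ n)) ≤
          K * (C / ε) ^ (n + 1) := by
  refine ⟨12, by norm_num, ?_⟩
  intro r ε n c e x f K hr hε hce hec hx hmono hgap hK hf t ht
  have hε0 : 0 < ε := hε.1
  have hε1 : ε ≤ 1 := hε.2
  set δ : ℝ := ε * r / ((n:ℝ) + 1) with hδ
  have hδ0 : 0 < δ := by positivity
  set B : Fin (n+1) → ℝ := fun i =>
    (2 * r) ^ n * ((n : ℝ) + 1) ^ n /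
      ((Nat.factorial i) * (Nat.factorial (n - i)) * (ε * r) ^ n) with hBdef
  -- the gap estimate
  have hkey : ∀ i j : Fin (n+1), (i:ℕ) < (j:ℕ) → δ * (((j:ℕ):ℝ) - ((i:ℕ):ℝ)) ≤ x j - x i := by
    intro i j hij
    have h1 := gap_aux x δ hgap ((j:ℕ) - (i:ℕ)) i j (by omega)
    have h2 : ((((j:ℕ) - (i:ℕ) : ℕ)):ℝ) = ((j:ℕ):ℝ) - ((i:ℕ):ℝ) := by
      rw [Nat.cast_sub hij.le]
    rw [h2] at h1
    linarith
  have habs : ∀ i j : Fin (n+1), i ≠ j →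
      δ * |((i:ℕ):ℝ) - ((j:ℕ):ℝ)| ≤ |x i - x j| := by
    intro i j hij
    rcases Nat.lt_or_ge (i:ℕ) (j:ℕ) with hlt | hge
    · have h1 := hkey i j hlt
      have h2 : |((i:ℕ):ℝ) - ((j:ℕ):ℝ)| = ((j:ℕ):ℝ) - ((i:ℕ):ℝ) := by
        rw [abs_sub_comm, abs_of_nonneg]
        have : ((i:ℕ):ℝ) ≤ ((j:ℕ):ℝ) := by exact_mod_cast hlt.le
        linarith
      rw [h2]
      calc δ * (((j:ℕ):ℝ) - ((i:ℕ):ℝ)) ≤ x j - x i := h1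
        _ ≤ |x i - x j| := by rw [abs_sub_comm]; exact le_abs_self _
    · have hlt : (j:ℕ) < (i:ℕ) := by
        rcases Nat.lt_or_ge (j:ℕ) (i:ℕ) with h | h
        · exact h
        · exact absurd (Fin.ext (le_antisymm h hge)) hij
      have h1 := hkey j i hlt
      have h2 : |((i:ℕ):ℝ) - ((j:ℕ):ℝ)| = ((i:ℕ):ℝ) - ((j:ℕ):ℝ) := by
        rw [abs_of_nonneg]
        have : ((j:ℕ):ℝ) ≤ ((i:ℕ):ℝ) := by exact_mod_cast hlt.le
        linarith
      rw [h2]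
      calc δ * (((i:ℕ):ℝ) - ((j:ℕ):ℝ)) ≤ x i - x j := h1
        _ ≤ |x i - x j| := le_abs_self _
  -- per-term bound
  have hB : ∀ i : Fin (n+1),
      |∏ j ∈ Finset.univ.erase i, (t - x j) / (x i - x j)| ≤ B i := by
    intro i
    have hin : (i:ℕ) ≤ n := by have := i.isLt; omega
    have hcard : (Finset.univ.erase i).card = n := by
      rw [Finset.card_erase_of_mem (Finset.mem_univ i)]
      simp
    have hfacpos1 : (0:ℝ) < (Nat.factorial i : ℝ) := by exact_mod_cast (Nat.factorial_pos _)
    have hfacpos2 : (0:ℝ) < (Nat.factorial (n - i) : ℝ) := by exact_mod_cast (Nat.factorial_pos _)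
    calc |∏ j ∈ Finset.univ.erase i, (t - x j) / (x i - x j)|
        = ∏ j ∈ Finset.univ.erase i, |(t - x j) / (x i - x j)| := Finset.abs_prod _ _
      _ ≤ ∏ j ∈ Finset.univ.erase i, (2 * r) / (δ * |((i:ℕ):ℝ) - ((j:ℕ):ℝ)|) := by
          refine Finset.prod_le_prod (fun j _ => abs_nonneg _) (fun j hj => ?_)
          have hji : j ≠ i := (Finset.mem_erase.mp hj).1
          have hij : i ≠ j := hji.symm
          have hvne : ((i:ℕ):ℝ) ≠ ((j:ℕ):ℝ) := by
            have : (i:ℕ) ≠ (j:ℕ) := fun h => hij (Fin.ext h)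
            exact_mod_cast this
          have hden0 : 0 < δ * |((i:ℕ):ℝ) - ((j:ℕ):ℝ)| :=
            mul_pos hδ0 (abs_pos.mpr (sub_ne_zero.mpr hvne))
          have hnum : |t - x j| ≤ 2 * r := by
            rw [abs_le]
            constructor
            · have := (hx j).2; have := ht.1; linarith
            · have := (hx j).1; have := ht.2; linarith
          rw [abs_div]
          exact div_le_div₀ (by linarith) hnum hden0 (habs i j hij)
      _ = (2 * r) ^ n / (δ ^ n * ∏ j ∈ Finset.univ.erase i, |((i:ℕ):ℝ) - ((j:ℕ):ℝ)|) := by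
          rw [Finset.prod_div_distrib, Finset.prod_const, hcard,
            Finset.prod_mul_distrib, Finset.prod_const, hcard]
      _ = B i := by
          have hfact : ∏ j ∈ Finset.univ.erase i, |((i:ℕ):ℝ) - ((j:ℕ):ℝ)| =
              (Nat.factorial i : ℝ) * (Nat.factorial (n - i) : ℝ) := by
            rw [prod_fin_erase i (fun a => |((i:ℕ):ℝ) - (a:ℝ)|)]
            exact prod_abs_fact n i hin
          rw [hfact, hBdef, hδ, div_pow]
          have h1 : ((n:ℝ) + 1) ≠ 0 := by positivity
          have h2 : (ε * r) ≠ 0 := by positivity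
          field_simp
  refine ⟨?_, ?_⟩
  · calc |∑ i : Fin (n + 1), f (x i) *
          (∏ j ∈ Finset.univ.erase i, (t - x j) / (x i - x j))|
        ≤ ∑ i : Fin (n + 1), |f (x i) *
          (∏ j ∈ Finset.univ.erase i, (t - x j) / (x i - x j))| :=
          Finset.abs_sum_le_sum_abs _ _
      _ ≤ ∑ i : Fin (n + 1), K * B i := by
          refine Finset.sum_le_sum (fun i _ => ?_)
          rw [abs_mul]
          exact mul_le_mul (hf i) (hB i) (abs_nonneg _) hK
      _ = K * ∑ i : Fin (n + 1), B i := by rw [Finset.mul_sum]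
  · refine mul_le_mul_of_nonneg_left ?_ hK
    have hfacn : (0:ℝ) < (Nat.factorial n : ℝ) := by exact_mod_cast (Nat.factorial_pos n)
    have hterm : ∀ i : Fin (n+1),
        (2 * r) ^ n * ((n : ℝ) + 1) ^ n /
          ((Nat.factorial i) * (Nat.factorial (n - i)) * (ε * r) ^ n) =
        (n.choose i : ℝ) * ((2 * r) ^ n * ((n : ℝ) + 1) ^ n /
          ((ε * r) ^ n * (Nat.factorial n : ℝ))) := by
      intro i
      have hin : (i:ℕ) ≤ n := by have := i.isLt; omega
      have hch : (n.choose i : ℝ) * (Nat.factorial i : ℝ) * (Nat.factorial (n - i) : ℝ)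
          = (Nat.factorial n : ℝ) := by
        exact_mod_cast Nat.choose_mul_factorial_mul_factorial hin
      have hfacpos1 : (0:ℝ) < (Nat.factorial i : ℝ) := by exact_mod_cast (Nat.factorial_pos _)
      have hfacpos2 : (0:ℝ) < (Nat.factorial (n - i) : ℝ) := by
        exact_mod_cast (Nat.factorial_pos _)
      have h2 : ((ε * r) ^ n : ℝ) ≠ 0 := by positivity
      field_simp
      linear_combination (-1:ℝ) * hch

    calc ∑ i : Fin (n + 1), (2 * r) ^ n * ((n : ℝ) + 1) ^ n /
            ((Nat.factorial i) * (Nat.factorial (n - i)) * (ε * r) ^ n)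
        = ∑ i : Fin (n + 1), (n.choose i : ℝ) *
            ((2 * r) ^ n * ((n : ℝ) + 1) ^ n / ((ε * r) ^ n * (Nat.factorial n : ℝ))) :=
          Finset.sum_congr rfl (fun i _ => hterm i)
      _ = (2:ℝ) ^ n * ((2 * r) ^ n * ((n : ℝ) + 1) ^ n /
            ((ε * r) ^ n * (Nat.factorial n : ℝ))) := by
          rw [← Finset.sum_mul]
          congr 1
          rw [Fin.sum_univ_eq_sum_range (fun a => ((n.choose a : ℕ) : ℝ)),
            ← Nat.cast_sum, Nat.sum_range_choose]
          push_cast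
          ring
      _ = (4 / ε) ^ n * (((n : ℝ) + 1) ^ n / (Nat.factorial n : ℝ)) := by
          have h2 : (ε * r) ≠ 0 := by positivity
          have h4 : (4:ℝ)^n = 2^(n*2) := by
            rw [mul_comm, pow_mul]; norm_num
          field_simp
          rw [← mul_pow, ← mul_pow]
          congr 1
          field_simp
          norm_num
      _ ≤ (4 / ε) ^ n * (3:ℝ) ^ n := by
          refine mul_le_mul_of_nonneg_left ?_ (by positivity)
          rw [div_le_iff₀ hfacn]
          exact pow3 n
      _ = (12 / ε) ^ n := by
          rw [← mul_pow]
          congr 1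
          ring
      _ ≤ (12 / ε) ^ (n + 1) := by
          refine pow_le_pow_right₀ ?_ (Nat.le_succ n)
          rw [le_div_iff₀ hε0]
          linarith
end
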